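/- Let d ≥ 1 and let μ, ν be finite Borel measures on ℝ^d with finite first moments. If ∫ f dμ = ∫ f dν for every nonnegative 1-Lipschitz increasing function f : ℝ^d → ℝ, then μ = ν. (This is the pointedness C ∩ (−C) = {0} of the cone C of finite signed Borel measures ρ with finite first moments satisfying ∫ f dρ ≥ 0 for all nonnegative 1-Lipschitz increasing f.) -/
import Mathlib


open MeasureTheory

/-- The Euclidean norm on `ℝ^d = Fin d → ℝ`. -/
noncomputable def eucNorm (d : ℕ) (x : Fin d → ℝ) : ℝ :=
  Real.sqrt (∑ i, (x i) ^ 2)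

open Set Filter
lemma eucNorm_nonneg (d : ℕ) (x : Fin d → ℝ) : 0 ≤ eucNorm d x := Real.sqrt_nonneg _

lemma abs_coord_le_eucNorm {d : ℕ} (x y : Fin d → ℝ) (i : Fin d) :
    |x i - y i| ≤ eucNorm d (x - y) := by
  have : |x i - y i| = Real.sqrt ((x i - y i) ^ 2) := (Real.sqrt_sq_eq_abs _).symm
  rw [this]
  apply Real.sqrt_le_sqrt
  have := Finset.single_le_sum (f := fun j => ((x - y) j) ^ 2)
    (fun j _ => sq_nonneg _) (Finset.mem_univ i)
  simpa using this

noncomputable def gfun {d : ℕ} [Nonempty (Fin d)] (a x : Fin d → ℝ) : ℝ :=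
  max 0 (Finset.univ.inf' Finset.univ_nonempty (fun i => x i - a i))

lemma gfun_nonneg {d : ℕ} [Nonempty (Fin d)] (a x : Fin d → ℝ) : 0 ≤ gfun a x :=
  le_max_left _ _

lemma gfun_le_add {d : ℕ} [Nonempty (Fin d)] (a x y : Fin d → ℝ) {C : ℝ}
    (hC : ∀ i, |x i - y i| ≤ C) : gfun a x ≤ gfun a y + C := by
  have hC0 : 0 ≤ C := le_trans (abs_nonneg _) (hC (Classical.arbitrary _))
  obtain ⟨j, -, hj⟩ := Finset.exists_mem_eq_inf' (Finset.univ_nonempty)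
    (fun i : Fin d => y i - a i)
  have h1 : Finset.univ.inf' Finset.univ_nonempty (fun i : Fin d => x i - a i)
      ≤ Finset.univ.inf' Finset.univ_nonempty (fun i : Fin d => y i - a i) + C := by
    rw [hj]
    calc Finset.univ.inf' Finset.univ_nonempty (fun i : Fin d => x i - a i)
        ≤ x j - a j := Finset.inf'_le _ (Finset.mem_univ j)
      _ ≤ (y j - a j) + C := by
          have := hC j
          have := abs_le.mp (hC j)
          linarith [this.2]
  unfold gfun
  rcases max_cases 0 (Finset.univ.inf' Finset.univ_nonempty (fun i : Fin d => x i - a i)) with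
    ⟨he, hle⟩ | ⟨he, hlt⟩
  · rw [he]
    have : (0:ℝ) ≤ max 0 (Finset.univ.inf' Finset.univ_nonempty fun i => y i - a i) :=
      le_max_left _ _
    linarith
  · rw [he]
    calc Finset.univ.inf' Finset.univ_nonempty (fun i : Fin d => x i - a i)
        ≤ Finset.univ.inf' Finset.univ_nonempty (fun i : Fin d => y i - a i) + C := h1
      _ ≤ max 0 (Finset.univ.inf' Finset.univ_nonempty fun i => y i - a i) + C := by
          gcongr; exact le_max_right _ _

lemma gfun_abs_sub_le {d : ℕ} [Nonempty (Fin d)] (a x y : Fin d → ℝ) {C : ℝ}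
    (hC : ∀ i, |x i - y i| ≤ C) : |gfun a x - gfun a y| ≤ C := by
  rw [abs_sub_le_iff]
  constructor
  · linarith [gfun_le_add a x y hC]
  · have hC' : ∀ i, |y i - x i| ≤ C := fun i => by rw [abs_sub_comm]; exact hC i
    linarith [gfun_le_add a y x hC']

lemma gfun_lip {d : ℕ} [Nonempty (Fin d)] (a x y : Fin d → ℝ) :
    |gfun a x - gfun a y| ≤ eucNorm d (x - y) :=
  gfun_abs_sub_le a x y (fun i => abs_coord_le_eucNorm x y i)

lemma gfun_continuous {d : ℕ} [Nonempty (Fin d)] (a : Fin d → ℝ) :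
    Continuous (gfun a) := by
  apply LipschitzWith.continuous (K := 1) (f := gfun a)
  apply LipschitzWith.of_dist_le_mul
  intro x y
  rw [Real.dist_eq, NNReal.coe_one, one_mul]
  apply gfun_abs_sub_le
  intro i
  have := dist_le_pi_dist x y i
  rwa [Real.dist_eq] at this

lemma gfun_mono {d : ℕ} [Nonempty (Fin d)] (a : Fin d → ℝ) : Monotone (gfun a) := by
  intro x y hxy
  apply max_le_max le_rfl
  apply Finset.le_inf'
  intro j _
  refine le_trans (Finset.inf'_le _ (Finset.mem_univ j)) ?_
  have := hxy j
  linarith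

lemma gfun_pos {d : ℕ} [Nonempty (Fin d)] (a x : Fin d → ℝ) (hx : ∀ i, a i < x i) :
    0 < gfun a x := by
  have : 0 < Finset.univ.inf' Finset.univ_nonempty (fun i : Fin d => x i - a i) := by
    rw [Finset.lt_inf'_iff]
    intro i _
    linarith [hx i]
  exact lt_of_lt_of_le this (le_max_right _ _)

lemma gfun_eq_zero {d : ℕ} [Nonempty (Fin d)] (a x : Fin d → ℝ) (hx : ¬ ∀ i, a i < x i) :
    gfun a x = 0 := by
  push_neg at hx
  obtain ⟨i, hi⟩ := hx
  have : Finset.univ.inf' Finset.univ_nonempty (fun i : Fin d => x i - a i) ≤ 0 := by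
    refine le_trans (Finset.inf'_le _ (Finset.mem_univ i)) (by linarith)
  exact max_eq_left this


/-- Pointedness of the cone of signed measures: two finite Borel measures on `ℝ^d` with
finite first moments which integrate every nonnegative `1`-Lipschitz increasing function
(w.r.t. the coordinatewise order) to the same value are equal. -/
theorem cone_pointed
    (d : ℕ) (hd : 1 ≤ d)
    (μ ν : Measure (Fin d → ℝ)) [IsFiniteMeasure μ] [IsFiniteMeasure ν]
    (hμ_mom : Integrable (fun x => eucNorm d x) μ)
    (hν_mom : Integrable (fun x => eucNorm d x) ν)
    (h : ∀ f : (Fin d → ℝ) → ℝ, (∀ x, 0 ≤ f x) →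
      (∀ x y, |f x - f y| ≤ eucNorm d (x - y)) → Monotone f →
      ∫ x, f x ∂μ = ∫ x, f x ∂ν) :
    μ = ν := by
  haveI : Nonempty (Fin d) := ⟨⟨0, hd⟩⟩
  have huniv : μ Set.univ = ν Set.univ := by
    have h1 := h (fun _ => 1) (fun _ => zero_le_one)
      (fun x y => by simpa using eucNorm_nonneg d (x - y))
      (fun x y _ => le_rfl)
    simp only [integral_const, smul_eq_mul, mul_one] at h1
    exact (ENNReal.toReal_eq_toReal_iff' (measure_ne_top μ _) (measure_ne_top ν _)).mp h1
  have hquad : ∀ a : Fin d → ℝ,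
      μ (Set.univ.pi fun i => Set.Ioi (a i)) = ν (Set.univ.pi fun i => Set.Ioi (a i)) := by
    intro a
    set s : Set (Fin d → ℝ) := Set.univ.pi fun i => Set.Ioi (a i) with hs
    have hsm : MeasurableSet s := MeasurableSet.univ_pi fun i => measurableSet_Ioi
    set φ : ℕ → (Fin d → ℝ) → ℝ := fun n x => min 1 (((n:ℝ)+1) * gfun a x) with hφ
    have hint : ∀ n : ℕ, ∫ x, φ n x ∂μ = ∫ x, φ n x ∂ν := by
      intro n
      have hc : (0:ℝ) < (n:ℝ) + 1 := by positivity
      have key := h (fun x => min (1 / ((n:ℝ)+1)) (gfun a x))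
        (fun x => le_min (by positivity) (gfun_nonneg a x))
        (fun x y => by
          refine le_trans ?_ (gfun_lip a x y)
          have := abs_min_sub_min_le_max (1/((n:ℝ)+1)) (gfun a x) (1/((n:ℝ)+1)) (gfun a y)
          simpa using this)
        (fun x y hxy => min_le_min le_rfl (gfun_mono a hxy))
      have hfe : ∀ x, φ n x = ((n:ℝ)+1) * min (1 / ((n:ℝ)+1)) (gfun a x) := by
        intro x
        rw [mul_min_of_nonneg _ _ hc.le, mul_one_div_cancel hc.ne']
      calc ∫ x, φ n x ∂μ = ∫ x, ((n:ℝ)+1) * min (1 / ((n:ℝ)+1)) (gfun a x) ∂μ := by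
             simp_rw [hfe]
        _ = ((n:ℝ)+1) * ∫ x, min (1 / ((n:ℝ)+1)) (gfun a x) ∂μ := integral_const_mul _ _
        _ = ((n:ℝ)+1) * ∫ x, min (1 / ((n:ℝ)+1)) (gfun a x) ∂ν := by rw [key]
        _ = ∫ x, ((n:ℝ)+1) * min (1 / ((n:ℝ)+1)) (gfun a x) ∂ν := (integral_const_mul _ _).symm
        _ = ∫ x, φ n x ∂ν := by simp_rw [hfe]
    have hφc : ∀ n, Continuous (φ n) := fun n =>
      continuous_const.min (continuous_const.mul (gfun_continuous a))
    have hφ01 : ∀ n x, 0 ≤ φ n x ∧ φ n x ≤ 1 := fun n x =>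
      ⟨le_min zero_le_one (mul_nonneg (by positivity) (gfun_nonneg a x)), min_le_left _ _⟩
    have hlim : ∀ x, Filter.Tendsto (fun n => φ n x) Filter.atTop
        (nhds (s.indicator (fun _ => (1:ℝ)) x)) := by
      intro x
      by_cases hx : x ∈ s
      · have hx' : ∀ i, a i < x i := fun i => hx i (Set.mem_univ i)
        have hg : 0 < gfun a x := gfun_pos a x hx'
        have hev : ∀ᶠ n : ℕ in Filter.atTop, φ n x = 1 := by
          obtain ⟨N, hN⟩ := exists_nat_ge (1 / gfun a x)
          filter_upwards [Filter.eventually_ge_atTop N] with n hn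
          have h1 : (1:ℝ) ≤ ((n:ℝ)+1) * gfun a x := by
            rw [div_le_iff₀ hg] at hN
            have hNn : (N:ℝ) ≤ (n:ℝ)+1 := by
              have : (N:ℝ) ≤ (n:ℝ) := by exact_mod_cast hn
              linarith
            nlinarith [gfun_nonneg a x]
          simp [hφ, min_eq_left h1]
        rw [Set.indicator_of_mem hx]
        exact Filter.Tendsto.congr' (hev.mono fun n hn => hn.symm) tendsto_const_nhds
      · have hg : gfun a x = 0 := gfun_eq_zero a x (fun hall => hx (fun i _ => hall i))
        rw [Set.indicator_of_notMem hx]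
        have hz : ∀ n : ℕ, φ n x = 0 := fun n => by simp [hφ, hg]
        simpa [hz] using (tendsto_const_nhds :
          Filter.Tendsto (fun _ : ℕ => (0:ℝ)) Filter.atTop (nhds 0))
    have hdct : ∀ (ρ : Measure (Fin d → ℝ)) [IsFiniteMeasure ρ],
        Filter.Tendsto (fun n => ∫ x, φ n x ∂ρ) Filter.atTop
          (nhds (∫ x, s.indicator (fun _ => (1:ℝ)) x ∂ρ)) := by
      intro ρ _
      apply tendsto_integral_of_dominated_convergence (bound := fun _ => (1:ℝ))
      · exact fun n => (hφc n).aestronglyMeasurable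
      · exact integrable_const 1
      · intro n
        filter_upwards with x
        rw [Real.norm_eq_abs, abs_of_nonneg (hφ01 n x).1]
        exact (hφ01 n x).2
      · filter_upwards with x using hlim x
    have heq : ∫ x, s.indicator (fun _ => (1:ℝ)) x ∂μ = ∫ x, s.indicator (fun _ => (1:ℝ)) x ∂ν :=
      tendsto_nhds_unique ((hdct μ).congr hint) (hdct ν)
    have h1 : ∫ x, s.indicator (fun _ => (1:ℝ)) x ∂μ = (μ s).toReal := integral_indicator_one hsm
    have h2 : ∫ x, s.indicator (fun _ => (1:ℝ)) x ∂ν = (ν s).toReal := integral_indicator_one hsm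
    rw [h1, h2] at heq
    exact (ENNReal.toReal_eq_toReal_iff' (measure_ne_top μ _) (measure_ne_top ν _)).mp heq
  have hgen : (inferInstance : MeasurableSpace (Fin d → ℝ)) =
      MeasurableSpace.generateFrom
        (Set.pi Set.univ '' Set.pi Set.univ (fun _ : Fin d => Set.range (Set.Ioi : ℝ → Set ℝ))) := by
    have hspan : ∀ i : Fin d, IsCountablySpanning (Set.range (Set.Ioi : ℝ → Set ℝ)) := by
      intro i
      refine ⟨fun n => Set.Ioi (-(n:ℝ)), fun n => ⟨-(n:ℝ), rfl⟩, ?_⟩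
      ext x
      simp only [Set.mem_iUnion, Set.mem_Ioi, Set.mem_univ, iff_true]
      obtain ⟨n, hn⟩ := exists_nat_gt (-x)
      exact ⟨n, by linarith⟩
    have h1 : (Real.measurableSpace) = MeasurableSpace.generateFrom (Set.range (Set.Ioi : ℝ → Set ℝ)) := by
      rw [BorelSpace.measurable_eq (α := ℝ), borel_eq_generateFrom_Ioi]
    calc (inferInstance : MeasurableSpace (Fin d → ℝ))
        = @MeasurableSpace.pi _ _ (fun _ => Real.measurableSpace) := rfl
      _ = @MeasurableSpace.pi _ _
            (fun _ : Fin d => MeasurableSpace.generateFrom (Set.range (Set.Ioi : ℝ → Set ℝ))) := by rw [h1]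
      _ = _ := generateFrom_pi_eq hspan
  have hpi : IsPiSystem
      (Set.pi Set.univ '' Set.pi Set.univ (fun _ : Fin d => Set.range (Set.Ioi : ℝ → Set ℝ))) := by
    rintro _ ⟨t1, ht1, rfl⟩ _ ⟨t2, ht2, rfl⟩ -
    refine ⟨fun i => t1 i ∩ t2 i, fun i _ => ?_, by rw [Set.pi_inter_distrib]⟩
    obtain ⟨b1, hb1⟩ := ht1 i (Set.mem_univ i)
    obtain ⟨b2, hb2⟩ := ht2 i (Set.mem_univ i)
    refine ⟨max b1 b2, ?_⟩
    show Set.Ioi (max b1 b2) = t1 i ∩ t2 i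
    rw [← hb1, ← hb2, Set.Ioi_inter_Ioi]
  refine ext_of_generate_finite _ hgen hpi ?_ huniv
  rintro _ ⟨t, ht, rfl⟩
  choose b hb using fun i => ht i (Set.mem_univ i)
  have hteq : t = fun i => Set.Ioi (b i) := funext fun i => (hb i).symm
  rw [hteq]
  exact hquad b
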